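/- arXiv:1705.01442 — 2 statements merged into one kernel-verified Lean document; each statement's English description precedes it below -/
import Mathlib

section
/- Let μ, λ, ε ∈ ℝ, let n ∈ ℝ^m with ⟨n, n⟩ = 1, and let M⁺ and M⁻ be m × m real matrices (the one-sided displacement gradients Du⁺ and Du⁻ across an interface). Set E^± = (M^± + (M^±)ᵀ)/2, B⁺ = 2μ E⁺ + λ (trace E⁺) I (the strong-phase stress A₀ e(u)⁺), B⁻ = ε (2μ E⁻ + λ (trace E⁻) I) (the weak-phase stress ε A₀ e(u)⁻), and define S₁^± = 2 (M^±)ᵀ B^± − ⟨B^±, E^±⟩_F I. If the transmission condition B⁺ n = B⁻ n holds, then ⟨(S₁⁺ − S₁⁻) n, n⟩ = 2 ⟨B⁻ n, (M⁺ − M⁻) n⟩ − ( ⟨B⁺, E⁺⟩_F − ⟨B⁻, E⁻⟩_F ). In other words, the integrand of the boundary expression of the shape derivative of the compliance in the ersatz material setting equals 2ε A₀ e(u)⁻ n · ⟦Du⟧ n − ⟦A e(u) : e(u)⟧, where ⟦·⟧ denotes the jump across the interface. -/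
open Matrix

lemma aux {m : ℕ} (A B : Matrix (Fin m) (Fin m) ℝ) (n : Fin m → ℝ) :
    ((Aᵀ * B).mulVec n) ⬝ᵥ n = B.mulVec n ⬝ᵥ A.mulVec n := by
  rw [← mulVec_mulVec, dotProduct_comm, dotProduct_mulVec, vecMul_transpose, dotProduct_comm]

/-- Jump formula for the boundary expression of the shape derivative of the compliance
in the ersatz material setting: under the transmission condition `B⁺ n = B⁻ n`,
`⟨(S₁⁺ − S₁⁻) n, n⟩ = 2 ⟨B⁻ n, (M⁺ − M⁻) n⟩ − (⟨B⁺, E⁺⟩_F − ⟨B⁻, E⁻⟩_F)`. -/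
theorem eshelby_jump_normal_component_ersatz {m : ℕ} (μ lam ε : ℝ)
    (n : Fin m → ℝ) (hn : n ⬝ᵥ n = 1)
    (Mp Mm : Matrix (Fin m) (Fin m) ℝ)
    (Ep Em Bp Bm S₁p S₁m : Matrix (Fin m) (Fin m) ℝ)
    (hEp : Ep = ((1 : ℝ) / 2) • (Mp + Mpᵀ))
    (hEm : Em = ((1 : ℝ) / 2) • (Mm + Mmᵀ))
    (hBp : Bp = (2 * μ) • Ep + (lam * Ep.trace) • (1 : Matrix (Fin m) (Fin m) ℝ))
    (hBm : Bm = ε • ((2 * μ) • Em + (lam * Em.trace) • (1 : Matrix (Fin m) (Fin m) ℝ)))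
    (hS₁p : S₁p = (2 : ℝ) • (Mpᵀ * Bp) - (Bpᵀ * Ep).trace • (1 : Matrix (Fin m) (Fin m) ℝ))
    (hS₁m : S₁m = (2 : ℝ) • (Mmᵀ * Bm) - (Bmᵀ * Em).trace • (1 : Matrix (Fin m) (Fin m) ℝ))
    (htrans : Bp.mulVec n = Bm.mulVec n) :
    ((S₁p - S₁m).mulVec n) ⬝ᵥ n
      = 2 * (Bm.mulVec n ⬝ᵥ (Mp - Mm).mulVec n)
        - ((Bpᵀ * Ep).trace - (Bmᵀ * Em).trace) := by
  subst hS₁p hS₁m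
  simp only [sub_mulVec, smul_mulVec, one_mulVec, sub_dotProduct,
    smul_dotProduct, smul_eq_mul, aux, hn, htrans, dotProduct_sub]
  ring
end

section
/- Let φ : ℝ^m → ℝ be differentiable at every point, and suppose that the derivative of φ does not vanish on the zero level set, i.e. Dφ(x) ≠ 0 for every x with φ(x) = 0. Then the topological boundary of the set Ω := { x ∈ ℝ^m : φ(x) < 0 } equals the zero level set of φ: ∂Ω = { x ∈ ℝ^m : φ(x) = 0 }. -/
theorem mem_closure_setOf_lt_of_fderiv_ne_zero {E : Type*} [NormedAddCommGroup E]
    [NormedSpace ℝ E] {f : E → ℝ} {a : E} (h : fderiv ℝ f a ≠ 0) :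
    a ∈ closure {x | f x < f a} := by
  rw [mem_closure_iff_frequently]
  simpa only [IsLocalMin, IsMinFilter, Filter.not_eventually, not_le, Set.mem_ofPred_eq] using
    mt IsLocalMin.fderiv_eq_zero h

/-- If `φ : ℝ^m → ℝ` is everywhere differentiable and its derivative does not vanish
on the zero level set, then the topological boundary of `Ω = {φ < 0}` is exactly the
zero level set `{φ = 0}`. -/
theorem frontier_sublevel_eq_zero_level_set {m : ℕ}
    (φ : EuclideanSpace ℝ (Fin m) → ℝ) (hφ : Differentiable ℝ φ)
    (hgrad : ∀ x : EuclideanSpace ℝ (Fin m), φ x = 0 → fderiv ℝ φ x ≠ 0) :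
    frontier {x : EuclideanSpace ℝ (Fin m) | φ x < 0}
      = {x : EuclideanSpace ℝ (Fin m) | φ x = 0} := by
  refine (frontier_lt_subset_eq hφ.continuous continuous_const).antisymm fun x (hx : φ x = 0) => ?_
  have hclosure : x ∈ closure {y | φ y < 0} := by
    simpa only [hx] using mem_closure_setOf_lt_of_fderiv_ne_zero (hgrad x hx)
  exact ⟨hclosure, fun hint => (interior_subset (s := {y | φ y < 0}) hint).ne hx⟩
end
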